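/- Let q be a prime and λ, μ, u, v be integers coprime to q. Define ν̄ = min over j = 1, …, k of ν_q(λ u^j − μ v^j), for some fixed k ≥ 2 (assuming all these differences are nonzero). Then for any j with 1 ≤ j ≤ k−1, either ν_q(λ u^j − μ v^j) = ν̄ or ν_q(λ u^(j+1) − μ v^(j+1)) = ν̄. In other words, among any two consecutive indices, at least one attains the minimal valuation. -/
import Mathlib


theorem mersenne_digits_consecutive_min_valuation
    (q : ℕ) (hq : q.Prime)
    (lam mu u v : ℤ)
    (hlam : IsCoprime lam (q : ℤ)) (hmu : IsCoprime mu (q : ℤ))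
    (hu : IsCoprime u (q : ℤ)) (hv : IsCoprime v (q : ℤ))
    (k : ℕ) (hk : 2 ≤ k)
    (hne : ∀ j ∈ Finset.Icc 1 k, lam * u ^ j - mu * v ^ j ≠ 0) :
    ∀ j : ℕ, 1 ≤ j → j ≤ k - 1 →
      padicValInt q (lam * u ^ j - mu * v ^ j) =
        (Finset.Icc 1 k).inf' (Finset.nonempty_Icc.mpr (by omega))
          (fun i => padicValInt q (lam * u ^ i - mu * v ^ i)) ∨
      padicValInt q (lam * u ^ (j + 1) - mu * v ^ (j + 1)) =
        (Finset.Icc 1 k).inf' (Finset.nonempty_Icc.mpr (by omega))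
          (fun i => padicValInt q (lam * u ^ i - mu * v ^ i)) := by
  haveI : Fact q.Prime := ⟨hq⟩
  intro j hj1 hjk
  set f : ℕ → ℕ := fun i => padicValInt q (lam * u ^ i - mu * v ^ i) with hf
  set N : ℕ := (Finset.Icc 1 k).inf' (Finset.nonempty_Icc.mpr (by omega)) f with hN
  by_contra hcon
  push_neg at hcon
  obtain ⟨h1, h2⟩ := hcon
  have hjmem : j ∈ Finset.Icc 1 k := Finset.mem_Icc.mpr ⟨hj1, by omega⟩
  have hj1mem : j + 1 ∈ Finset.Icc 1 k := Finset.mem_Icc.mpr ⟨by omega, by omega⟩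
  have hle1 : N + 1 ≤ f j := lt_of_le_of_ne (Finset.inf'_le f hjmem) (Ne.symm h1)
  have hle2 : N + 1 ≤ f (j + 1) := lt_of_le_of_ne (Finset.inf'_le f hj1mem) (Ne.symm h2)
  set Q : ℤ := (q : ℤ) ^ (N + 1) with hQ
  have hd1 : Q ∣ lam * u ^ j - mu * v ^ j :=
    (padicValInt_dvd_iff (N + 1) _).mpr (Or.inr hle1)
  have hd2 : Q ∣ lam * u ^ (j + 1) - mu * v ^ (j + 1) :=
    (padicValInt_dvd_iff (N + 1) _).mpr (Or.inr hle2)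
  have hkey : Q ∣ lam * u ^ j * (v - u) := by
    have : lam * u ^ j * (v - u)
        = v * (lam * u ^ j - mu * v ^ j) - (lam * u ^ (j + 1) - mu * v ^ (j + 1)) := by
      ring
    rw [this]
    exact dvd_sub (Dvd.dvd.mul_left hd1 v) hd2
  -- coprimality of Q with lam * u^j
  have hcop' : IsCoprime Q (lam * u ^ j) := by
    have : IsCoprime (lam * u ^ j) ((q : ℤ) ^ (N + 1)) :=
      (hlam.mul_left hu.pow_left).pow_right
    exact this.symm
  have hvu : Q ∣ v - u := hcop'.dvd_of_dvd_mul_left hkey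
  have huv : Q ∣ u - v := by simpa using dvd_neg.mpr hvu
  -- Q ∣ lam - mu
  have hpow : ∀ i : ℕ, Q ∣ u ^ i - v ^ i := fun i => huv.trans (sub_dvd_pow_sub_pow u v i)
  have hlm : Q ∣ (lam - mu) * v ^ j := by
    have : (lam - mu) * v ^ j
        = (lam * u ^ j - mu * v ^ j) - lam * (u ^ j - v ^ j) := by ring
    rw [this]
    exact dvd_sub hd1 ((hpow j).mul_left lam)
  have hlm' : Q ∣ lam - mu := by
    have hcv : IsCoprime Q (v ^ j) := (hv.pow_left.pow_right).symm
    exact hcv.dvd_of_dvd_mul_right hlm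
  -- minimal index
  obtain ⟨i0, hi0mem, hi0⟩ := Finset.exists_mem_eq_inf' (Finset.nonempty_Icc.mpr (by omega : 1 ≤ k)) f
  have hdall : Q ∣ lam * u ^ i0 - mu * v ^ i0 := by
    have : lam * u ^ i0 - mu * v ^ i0
        = lam * (u ^ i0 - v ^ i0) + (lam - mu) * v ^ i0 := by ring
    rw [this]
    exact dvd_add ((hpow i0).mul_left lam) (hlm'.mul_right _)
  have := (padicValInt_dvd_iff (N + 1) _).mp hdall
  rcases this with h0 | hge
  · exact hne i0 hi0mem h0
  · have hge' : N + 1 ≤ f i0 := hge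
    rw [← hi0] at hge'
    omega
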